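/- arXiv:1301.0547 — 5 statements merged into one kernel-verified Lean document; each statement's English description precedes it below -/
import Mathlib

section
/- Let κ ∈ (0,1). The positive solutions d_n of tan(κx) = x, the positive solutions η_n of tan(κx) = −1/x, and the vertical asymptotes θ_n = π(2n−1)/(2κ) of tan(κx) interlace: 0 < d_1 < θ_1 < η_1 < d_2 < θ_2 < η_2 < ⋯, i.e., for every n ≥ 1 there is exactly one solution d_n of tan(κx)=x in (θ_{n−1}, θ_n) (with θ_0 = 0) and exactly one solution η_n of tan(κx) = −1/x in (θ_n, θ_{n+1}), and d_n < θ_n < η_n < d_{n+1}. -/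
/-!
Put `φ(x) = κx - arctan x` (`TanInterlacing.phase κ`). On the branch
`κx ∈ (kπ - π/2, kπ + π/2)` the equation `tan(κx) = x` says `φ(x) = kπ`, and for `x > 0` the
equation `tan(κx) = -1/x` says `φ(x) = kπ - π/2`. Since `φ' = κ - 1/(1 + x²)` increases on
`[0, ∞)`, `φ` is strictly convex there; as `φ(0) = 0`, it is strictly increasing on the part of
`(0, ∞)` where it is nonnegative. This gives uniqueness and the comparison `η_n < d_{n+1}`.
Existence is the intermediate value theorem, using `φ(θ_n) = nπ - π/2 - arctan θ_n` and, on the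
first branch, `φ'(0) = κ - 1 < 0`.
-/

open Real Set

noncomputable def theta (κ : ℝ) (n : ℕ) : ℝ := (2 * (n : ℝ) - 1) * Real.pi / (2 * κ)

open Filter Topology

theorem StrictConvexOn.strictMonoOn_of_le {𝕜 : Type*} [Field 𝕜] [LinearOrder 𝕜]
    [IsStrictOrderedRing 𝕜] {s : Set 𝕜} {f : 𝕜 → 𝕜} {a : 𝕜} (hf : StrictConvexOn 𝕜 s f)
    (ha : a ∈ s) : StrictMonoOn f {x | x ∈ s ∧ a < x ∧ f a ≤ f x} := by
  rintro x ⟨-, hax, hfx⟩ y ⟨hy, -, -⟩ hxy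
  have hsecant := hf.secant_strict_mono_aux1 ha hy hax hxy
  have hfa : (y - x) * f a ≤ (y - x) * f x := mul_le_mul_of_nonneg_left hfx (sub_nonneg.2 hxy.le)
  refine lt_of_mul_lt_mul_left (a := x - a) ?_ (sub_nonneg.2 hax.le)
  linarith

theorem Real.tan_eq_iff_arctan_eq {x y : ℝ} (k : ℤ) (h : y - k * π ∈ Ioo (-(π / 2)) (π / 2)) :
    tan y = x ↔ arctan x = y - k * π := by
  rw [← tan_periodic.sub_int_mul_eq k]
  constructor
  · rintro rfl
    exact arctan_tan h.1 h.2
  · rintro hx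
    rw [← hx, tan_arctan]

namespace TanInterlacing

noncomputable def phase (κ x : ℝ) : ℝ := κ * x - arctan x

theorem phase_zero (κ : ℝ) : phase κ 0 = 0 := by simp [phase]

theorem continuous_phase (κ : ℝ) : Continuous (phase κ) :=
  (continuous_const.mul continuous_id).sub continuous_arctan

theorem hasDerivAt_phase (κ x : ℝ) : HasDerivAt (phase κ) (κ - 1 / (1 + x ^ 2)) x := by
  have h := ((hasDerivAt_id x).const_mul κ).sub (hasDerivAt_arctan x)
  rwa [mul_one] at h

theorem strictConvexOn_phase (κ : ℝ) : StrictConvexOn ℝ (Ici 0) (phase κ) := by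
  refine StrictMonoOn.strictConvexOn_of_deriv (convex_Ici 0) (continuous_phase κ).continuousOn ?_
  rw [interior_Ici, funext fun x => (hasDerivAt_phase κ x).deriv]
  intro x hx y _ hxy
  have hx : 0 ≤ x := le_of_lt hx
  dsimp only
  gcongr

theorem strictMonoOn_phase (κ : ℝ) : StrictMonoOn (phase κ) {x | 0 < x ∧ 0 ≤ phase κ x} :=
  ((strictConvexOn_phase κ).strictMonoOn_of_le self_mem_Ici).mono fun _ ⟨hx, hφ⟩ =>
    ⟨hx.le, hx, (phase_zero κ).symm ▸ hφ⟩

theorem eq_of_phase_eq {κ x y c : ℝ} (hx : 0 < x) (hy : 0 < y) (hc : 0 ≤ c)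
    (hφx : phase κ x = c) (hφy : phase κ y = c) : x = y :=
  (strictMonoOn_phase κ).injOn ⟨hx, hφx ▸ hc⟩ ⟨hy, hφy ▸ hc⟩ (hφx.trans hφy.symm)

theorem lt_of_phase_lt {κ x y : ℝ} (hx : 0 < x) (hy : 0 < y) (hφx : 0 ≤ phase κ x)
    (h : phase κ x < phase κ y) : x < y :=
  ((strictMonoOn_phase κ).lt_iff_lt ⟨hx, hφx⟩ ⟨hy, hφx.trans h.le⟩).1 h

theorem exists_phase_neg {κ b : ℝ} (hκ : κ < 1) (hb : 0 < b) : ∃ p ∈ Ioo 0 b, phase κ p < 0 := by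
  have hslope : ∀ᶠ z in 𝓝[>] 0, slope (phase κ) 0 z < 0 :=
    (hasDerivAt_phase κ 0).hasDerivWithinAt.limsup_slope_le' (lt_irrefl (0 : ℝ)) (by norm_num [hκ])
  obtain ⟨p, hp, hpb⟩ := (hslope.and (Ioo_mem_nhdsGT hb)).exists
  rw [slope_def_field, phase_zero, sub_zero, sub_zero] at hp
  exact ⟨p, hpb, neg_of_div_neg_left hp hpb.1.le⟩

theorem tan_eq_self_iff_phase_eq {κ x : ℝ} (k : ℤ) (h : κ * x - k * π ∈ Ioo (-(π / 2)) (π / 2)) :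
    tan (κ * x) = x ↔ phase κ x = k * π := by
  rw [tan_eq_iff_arctan_eq k h, phase]
  constructor <;> intro <;> linarith

theorem tan_eq_neg_inv_iff_phase_eq {κ x : ℝ} (hx : 0 < x) (k : ℤ)
    (h : κ * x - k * π ∈ Ioo (-(π / 2)) (π / 2)) :
    tan (κ * x) = -1 / x ↔ phase κ x = k * π - π / 2 := by
  rw [tan_eq_iff_arctan_eq k h, neg_div, one_div, arctan_neg, arctan_inv_of_pos hx, phase]
  constructor <;> intro <;> linarith

theorem mul_theta {κ : ℝ} (hκ : κ ≠ 0) (n : ℕ) : κ * theta κ n = n * π - π / 2 := by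
  unfold theta
  field_simp

theorem theta_pos {κ : ℝ} (hκ : 0 < κ) {n : ℕ} (hn : 1 ≤ n) : 0 < theta κ n := by
  have hn : (1 : ℝ) ≤ n := by exact_mod_cast hn
  exact div_pos (by nlinarith [pi_pos]) (by linarith)

theorem theta_strictMono {κ : ℝ} (hκ : 0 < κ) : StrictMono (theta κ) := fun m n hmn => by
  have hmn : (m : ℝ) < n := by exact_mod_cast hmn
  exact div_lt_div_of_pos_right (by nlinarith [pi_pos]) (by linarith)

theorem theta_pred_le_ite {κ : ℝ} (hκ : 0 < κ) (n : ℕ) :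
    theta κ (n - 1) ≤ if n = 1 then 0 else theta κ (n - 1) := by
  split_ifs with hn
  · subst hn
    simpa [theta, neg_div] using div_nonneg pi_pos.le (mul_pos two_pos hκ).le
  · rfl

theorem ite_theta_pred_nonneg {κ : ℝ} (hκ : 0 < κ) {n : ℕ} (hn : 1 ≤ n) :
    0 ≤ if n = 1 then 0 else theta κ (n - 1) := by
  split_ifs with hn₁
  · rfl
  · exact (theta_pos hκ (by omega)).le

theorem phase_theta_mem {κ : ℝ} (hκ : 0 < κ) {n : ℕ} (hn : 1 ≤ n) :
    phase κ (theta κ n) ∈ Ioo ((n - 1) * π) (n * π - π / 2) := by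
  rw [phase, mul_theta hκ.ne']
  have := arctan_pos.2 (theta_pos hκ hn)
  have := arctan_lt_pi_div_two (theta κ n)
  constructor <;> linarith

theorem tan_eq_self_iff {κ x : ℝ} (hκ : 0 < κ) {n : ℕ} (hn : 1 ≤ n)
    (hx : x ∈ Ioo (if n = 1 then 0 else theta κ (n - 1)) (theta κ n)) :
    tan (κ * x) = x ↔ phase κ x = (n - 1) * π := by
  have hlo := mul_lt_mul_of_pos_left ((theta_pred_le_ite hκ n).trans_lt hx.1) hκ
  have hhi := mul_lt_mul_of_pos_left hx.2 hκ
  rw [mul_theta hκ.ne', Nat.cast_pred hn] at hlo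
  rw [mul_theta hκ.ne'] at hhi
  have h := tan_eq_self_iff_phase_eq (κ := κ) (x := x) ((n : ℤ) - 1)
  push_cast at h
  exact h ⟨by linarith, by linarith⟩

theorem tan_eq_neg_inv_iff {κ x : ℝ} (hκ : 0 < κ) {n : ℕ} (hn : 1 ≤ n)
    (hx : x ∈ Ioo (theta κ n) (theta κ (n + 1))) :
    tan (κ * x) = -1 / x ↔ phase κ x = n * π - π / 2 := by
  have hlo := mul_lt_mul_of_pos_left hx.1 hκ
  have hhi := mul_lt_mul_of_pos_left hx.2 hκ
  rw [mul_theta hκ.ne'] at hlo hhi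
  push_cast at hhi
  have h := tan_eq_neg_inv_iff_phase_eq ((theta_pos hκ hn).trans hx.1) (κ := κ) n
  push_cast at h
  exact h ⟨by linarith, by linarith⟩

theorem exists_phase_eq_pred_mul_pi {κ : ℝ} (hκ₀ : 0 < κ) (hκ₁ : κ < 1) {n : ℕ} (hn : 1 ≤ n) :
    ∃ x ∈ Ioo (if n = 1 then 0 else theta κ (n - 1)) (theta κ n), phase κ x = (n - 1) * π := by
  have hθ := phase_theta_mem hκ₀ hn
  obtain rfl | hn₂ := hn.eq_or_lt
  · obtain ⟨p, hp, hφp⟩ := exists_phase_neg hκ₁ (theta_pos hκ₀ le_rfl)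
    obtain ⟨x, hx, hφx⟩ := intermediate_value_Ioo hp.2.le (continuous_phase κ).continuousOn
      (show ((1 : ℕ) - 1) * π ∈ Ioo (phase κ p) (phase κ (theta κ 1)) by
        push_cast at hθ ⊢; constructor <;> linarith [hθ.1])
    exact ⟨x, ⟨hp.1.trans hx.1, hx.2⟩, hφx⟩
  · have hθ' := phase_theta_mem hκ₀ (Nat.le_sub_one_of_lt hn₂)
    rw [Nat.cast_pred hn] at hθ'
    obtain ⟨x, hx, hφx⟩ := intermediate_value_Ioo
      (theta_strictMono hκ₀ (Nat.sub_one_lt_of_lt hn₂)).le (continuous_phase κ).continuousOn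
      (show ((n : ℝ) - 1) * π ∈ Ioo _ _ from ⟨by linarith [hθ'.2, pi_pos], hθ.1⟩)
    exact ⟨x, by rwa [if_neg hn₂.ne'], hφx⟩

theorem exists_phase_eq_sub_pi_div_two {κ : ℝ} (hκ : 0 < κ) {n : ℕ} (hn : 1 ≤ n) :
    ∃ x ∈ Ioo (theta κ n) (theta κ (n + 1)), phase κ x = n * π - π / 2 := by
  have hθ := phase_theta_mem hκ hn
  have hθ' := phase_theta_mem hκ (by omega : 1 ≤ n + 1)
  push_cast at hθ'
  exact intermediate_value_Ioo (theta_strictMono hκ (Nat.lt_add_one n)).le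
    (continuous_phase κ).continuousOn ⟨hθ.2, by linarith [hθ'.1, pi_pos]⟩

end TanInterlacing

open TanInterlacing in
theorem stmt_5 (κ : ℝ) (hκ₀ : 0 < κ) (hκ₁ : κ < 1) :
    ∃ d η : ℕ → ℝ,
      (∀ n : ℕ, 1 ≤ n →
        -- d n is the unique solution of tan(κ x) = x in (θ (n-1), θ n), with θ 0 := 0
        (d n ∈ Ioo (if n = 1 then 0 else theta κ (n - 1)) (theta κ n) ∧
          Real.tan (κ * d n) = d n ∧
          (∀ x ∈ Ioo (if n = 1 then 0 else theta κ (n - 1)) (theta κ n),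
            Real.tan (κ * x) = x → x = d n)) ∧
        -- η n is the unique solution of tan(κ x) = -1/x in (θ n, θ (n+1))
        (η n ∈ Ioo (theta κ n) (theta κ (n + 1)) ∧
          Real.tan (κ * η n) = -1 / η n ∧
          (∀ x ∈ Ioo (theta κ n) (theta κ (n + 1)),
            Real.tan (κ * x) = -1 / x → x = η n)) ∧
        -- interlacing: 0 < d 1 and d n < θ n < η n < d (n+1)
        (0 < d n ∧ d n < theta κ n ∧ theta κ n < η n ∧ η n < d (n + 1))) := by
  choose! d hd hd_phase using fun n (hn : 1 ≤ n) => exists_phase_eq_pred_mul_pi hκ₀ hκ₁ hn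
  choose! η hη hη_phase using fun n (hn : 1 ≤ n) => exists_phase_eq_sub_pi_div_two hκ₀ hn
  have hπ := pi_pos
  have hd_pos : ∀ {n x}, 1 ≤ n → x ∈ Ioo (if n = 1 then 0 else theta κ (n - 1)) (theta κ n) →
      0 < x := fun hn hx => (ite_theta_pred_nonneg hκ₀ hn).trans_lt hx.1
  have hη_pos : ∀ {n x}, 1 ≤ n → x ∈ Ioo (theta κ n) (theta κ (n + 1)) → 0 < x :=
    fun hn hx => (theta_pos hκ₀ hn).trans hx.1
  refine ⟨d, η, fun n hn => ?_⟩
  have hn' : (1 : ℝ) ≤ n := by exact_mod_cast hn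
  refine ⟨⟨hd n hn, (tan_eq_self_iff hκ₀ hn (hd n hn)).2 (hd_phase n hn), fun x hx htan => ?_⟩,
    ⟨hη n hn, (tan_eq_neg_inv_iff hκ₀ hn (hη n hn)).2 (hη_phase n hn), fun x hx htan => ?_⟩,
    hd_pos hn (hd n hn), (hd n hn).2, (hη n hn).1, ?_⟩
  · exact eq_of_phase_eq (hd_pos hn hx) (hd_pos hn (hd n hn)) (by nlinarith)
      ((tan_eq_self_iff hκ₀ hn hx).1 htan) (hd_phase n hn)
  · exact eq_of_phase_eq (hη_pos hn hx) (hη_pos hn (hη n hn)) (by nlinarith)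
      ((tan_eq_neg_inv_iff hκ₀ hn hx).1 htan) (hη_phase n hn)
  · have hn₁ : 1 ≤ n + 1 := by omega
    refine lt_of_phase_lt (κ := κ) (hη_pos hn (hη n hn)) (hd_pos hn₁ (hd (n + 1) hn₁)) ?_ ?_ <;>
      simp only [hη_phase n hn, hd_phase (n + 1) hn₁] <;> push_cast <;> nlinarith
end

section
/- Let 0 < r_b < R, δ > 0, and let A(L) = {n : α_n ≤ L} where α_n are the solutions (in increasing order) of tan(√α(R−r_b)) = R√α listed via the substitution x = R√α as solutions of tan(κx) = x with κ = 1 − r_b/R. Then for L ≥ δ, C₁√L ≤ |A(L)| ≤ C₂√L with C₁ = (R−r_b)/π − 1/√δ and C₂ = (R−r_b)/π + 1/√δ. -/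
/-!
With `κ = R - rb` and `y = κ √α`, the eigenvalue equation becomes `tan y = m y`
with `m = R / κ > 1`. A positive root has `tan y > 0`, so it lies in a branch
`(kπ, kπ + π/2)`, and `tan y / y` is strictly increasing on each branch, so a branch holds
at most one root. Since `m > 1`, `tan y - m y` changes sign on every branch, so every branch
holds exactly one root. Counting the branches that meet, resp. lie in, `(0, κ √L]` gives
between `κ √L / π - 1/2` and `κ √L / π + 1` roots, and `1 ≤ √L / √δ` absorbs the
constants.
-/

open Real Set

namespace Real

theorem cos_ne_zero_of_mem_Ioo_nat_mul_pi {k : ℕ} {y : ℝ}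
    (hy : y ∈ Ioo (k * π) (k * π + π / 2)) : cos y ≠ 0 := by
  have hcos : 0 < cos (y - k * π) :=
    cos_pos_of_mem_Ioo ⟨by linarith [pi_pos, hy.1], by linarith [hy.2]⟩
  rw [← sub_add_cancel y (k * π), cos_add_nat_mul_pi]
  exact mul_ne_zero (pow_ne_zero _ (by norm_num)) hcos.ne'

theorem strictMonoOn_tan_div_self (k : ℕ) :
    StrictMonoOn (fun y => tan y / y) (Ioo (k * π) (k * π + π / 2)) := by
  have hpos : ∀ y ∈ Ioo (k * π) (k * π + π / 2), 0 < y := fun y hy =>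
    lt_of_le_of_lt (by positivity) hy.1
  have hderiv : ∀ y ∈ Ioo (k * π) (k * π + π / 2),
      HasDerivAt (fun y => tan y / y) ((y - sin y * cos y) / (y ^ 2 * cos y ^ 2)) y := by
    intro y hy
    have hcos := cos_ne_zero_of_mem_Ioo_nat_mul_pi hy
    refine ((hasDerivAt_tan hcos).div (hasDerivAt_id y) (hpos y hy).ne').congr_deriv ?_
    rw [id, tan_eq_sin_div_cos]
    field_simp
  refine strictMonoOn_of_hasDerivWithinAt_pos (convex_Ioo _ _)
    (fun y hy => (hderiv y hy).continuousAt.continuousWithinAt)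
    (fun y hy => (hderiv y (interior_subset hy)).hasDerivWithinAt) fun y hy => ?_
  rw [interior_Ioo] at hy
  have hy0 := hpos y hy
  have hsc : sin y * cos y < y := by
    have := sin_lt (by linarith : 0 < 2 * y)
    rw [sin_two_mul] at this
    linarith
  have hcos := cos_ne_zero_of_mem_Ioo_nat_mul_pi hy
  apply div_pos (by linarith)
  positivity

theorem mem_Ioo_floor_div_pi_mul_pi_of_tan_pos {y : ℝ} (hy : 0 ≤ y) (htan : 0 < tan y) :
    y ∈ Ioo (⌊y / π⌋₊ * π) (⌊y / π⌋₊ * π + π / 2) := by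
  set k := ⌊y / π⌋₊
  have hk : k * π ≤ y := (le_div_iff₀ pi_pos).mp (Nat.floor_le (by positivity))
  have hk' : y < k * π + π := by
    have := (div_lt_iff₀ pi_pos).mp (Nat.lt_floor_add_one (y / π))
    linarith
  rw [← tan_sub_nat_mul_pi y k] at htan
  refine ⟨lt_of_le_of_ne hk fun h => ?_, lt_of_not_ge fun h => ?_⟩
  · rw [← h, sub_self, tan_zero] at htan
    exact htan.false
  · rw [← tan_sub_pi] at htan
    linarith [tan_nonpos_of_nonpos_of_neg_pi_div_two_le (x := y - k * π - π)
      (by linarith) (by linarith)]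

theorem exists_tan_lt_mul_self {m : ℝ} (hm : 1 < m) :
    ∃ y ∈ Ioo 0 (π / 2), tan y < m * y := by
  have hm0 : 0 < m := one_pos.trans hm
  -- any `y ∈ (0, π/2)` with `cos y > 1 / m` works, since `sin y < y`
  set y := arccos (1 / m) / 2 with hy
  have harccos_pos : 0 < arccos (1 / m) := arccos_pos.2 ((div_lt_one hm0).2 hm)
  have harccos_lt : arccos (1 / m) < π / 2 := arccos_lt_pi_div_two.2 (by positivity)
  have hy0 : 0 < y := by positivity
  have hcos : 1 / m < cos y := by
    rw [← cos_arccos (by rw [le_div_iff₀ hm0]; linarith) ((div_le_one hm0).2 hm.le)]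
    exact cos_lt_cos_of_nonneg_of_le_pi hy0.le (by linarith [pi_pos]) (by linarith)
  have hmcos : 1 < m * cos y := by rwa [div_lt_iff₀' hm0] at hcos
  refine ⟨y, ⟨hy0, by linarith⟩, ?_⟩
  rw [tan_eq_sin_div_cos, div_lt_iff₀ (by linarith [one_div_pos.2 hm0])]
  nlinarith [sin_lt hy0]

theorem floor_div_pi_eq_of_mem_Ioo {k : ℕ} {y : ℝ} (hy : y ∈ Ioo (k * π) (k * π + π / 2)) :
    ⌊y / π⌋₊ = k := by
  have hy0 : 0 ≤ y := (by positivity : (0 : ℝ) ≤ k * π).trans hy.1.le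
  rw [Nat.floor_eq_iff (div_nonneg hy0 pi_pos.le), le_div_iff₀ pi_pos, div_lt_iff₀ pi_pos]
  constructor <;> linarith [hy.1, hy.2, pi_pos]

theorem mapsTo_floor_div_pi_Iic (t : ℝ) :
    MapsTo (fun y => ⌊y / π⌋₊) (Iic t) (Iic ⌊t / π⌋₊) :=
  fun _ hy => Nat.floor_le_floor (div_le_div_of_nonneg_right hy pi_pos.le)

end Real

def tanRoots (m : ℝ) : Set ℝ := {y | 0 < y ∧ tan y = m * y}

theorem floor_div_pi_injOn_tanRoots {m : ℝ} (hm : 0 < m) :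
    InjOn (fun y => ⌊y / π⌋₊) (tanRoots m) := by
  have hbranch :
      ∀ y ∈ tanRoots m, y ∈ Ioo (⌊y / π⌋₊ * π) (⌊y / π⌋₊ * π + π / 2) :=
    fun y hy => mem_Ioo_floor_div_pi_mul_pi_of_tan_pos hy.1.le (hy.2 ▸ mul_pos hm hy.1)
  intro y hy y' hy' (h : ⌊y / π⌋₊ = ⌊y' / π⌋₊)
  have hy'_branch := hbranch y' hy'
  rw [← h] at hy'_branch
  refine (strictMonoOn_tan_div_self _).injOn (hbranch y hy) hy'_branch ?_
  simp only [hy.2, hy'.2, mul_div_cancel_right₀ _ hy.1.ne', mul_div_cancel_right₀ _ hy'.1.ne']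

theorem exists_mem_tanRoots_mem_Ioo {m : ℝ} (hm : 1 < m) (k : ℕ) :
    ∃ y ∈ tanRoots m, y ∈ Ioo (k * π) (k * π + π / 2) := by
  have hm0 : 0 < m := one_pos.trans hm
  have hkπ : (0 : ℝ) ≤ k * π := by positivity
  obtain ⟨y₀, hy₀, htan_y₀⟩ := exists_tan_lt_mul_self hm
  set c := arctan (m * (k * π + π / 2))
  have hc : c ∈ Ioo 0 (π / 2) := ⟨arctan_pos.2 (by positivity), arctan_lt_pi_div_two _⟩
  have hp : y₀ + k * π ∈ Ioo (k * π) (k * π + π / 2) :=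
    ⟨by linarith [hy₀.1], by linarith [hy₀.2]⟩
  have hq : c + k * π ∈ Ioo (k * π) (k * π + π / 2) :=
    ⟨by linarith [hc.1], by linarith [hc.2]⟩
  have hfp : tan (y₀ + k * π) - m * (y₀ + k * π) < 0 := by
    rw [tan_add_nat_mul_pi]; nlinarith
  have hfq : 0 < tan (c + k * π) - m * (c + k * π) := by
    rw [tan_add_nat_mul_pi, tan_arctan]; nlinarith [hq.2]
  have hsub : uIcc (y₀ + k * π) (c + k * π) ⊆ Ioo (k * π) (k * π + π / 2) :=
    ordConnected_Ioo.uIcc_subset hp hq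
  have hcont : ContinuousOn (fun y => tan y - m * y) (uIcc (y₀ + k * π) (c + k * π)) :=
    (continuousOn_tan.mono fun y hy => cos_ne_zero_of_mem_Ioo_nat_mul_pi (hsub hy)).sub
      (continuousOn_const.mul continuousOn_id)
  obtain ⟨y, hy, hfy⟩ := intermediate_value_uIcc hcont (mem_uIcc_of_le hfp.le hfq.le)
  have hy_branch := hsub hy
  exact ⟨y, ⟨hkπ.trans_lt hy_branch.1, sub_eq_zero.1 hfy⟩, hy_branch⟩

theorem finite_tanRoots_inter_Iic {m : ℝ} (hm : 0 < m) (t : ℝ) :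
    (tanRoots m ∩ Iic t).Finite :=
  (finite_Iic _).of_injOn ((mapsTo_floor_div_pi_Iic t).mono_left inter_subset_right)
    ((floor_div_pi_injOn_tanRoots hm).mono inter_subset_left)

theorem ncard_tanRoots_inter_Iic_le {m t : ℝ} (hm : 0 < m) (ht : 0 ≤ t) :
    ((tanRoots m ∩ Iic t).ncard : ℝ) ≤ t / π + 1 := by
  have hle := ncard_le_ncard_of_injOn _
    ((mapsTo_floor_div_pi_Iic t).mono_left inter_subset_right)
    ((floor_div_pi_injOn_tanRoots hm).mono inter_subset_left)
  rw [ncard_Iic_nat] at hle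
  have hfloor := Nat.floor_le (div_nonneg ht pi_pos.le)
  have : ((tanRoots m ∩ Iic t).ncard : ℝ) ≤ ⌊t / π⌋₊ + 1 := by exact_mod_cast hle
  linarith

theorem sub_half_le_ncard_tanRoots_inter_Iic {m : ℝ} (hm : 1 < m) (t : ℝ) :
    t / π - 1 / 2 ≤ ((tanRoots m ∩ Iic t).ncard : ℝ) := by
  rcases lt_or_ge (t / π) (1 / 2) with ht | ht
  · linarith [(Nat.cast_nonneg _ : (0 : ℝ) ≤ (tanRoots m ∩ Iic t).ncard)]
  set n := ⌊t / π - 1 / 2⌋₊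
  have hn : (n : ℝ) * π + π / 2 ≤ t := by
    have := Nat.floor_le (by linarith : 0 ≤ t / π - 1 / 2)
    rw [le_sub_iff_add_le, le_div_iff₀ pi_pos] at this
    linarith
  choose f hf hf_branch using exists_mem_tanRoots_mem_Ioo hm
  have hmaps : MapsTo f (Iic n) (tanRoots m ∩ Iic t) := fun k hk => by
    have hkn : (k : ℝ) * π ≤ n * π := by gcongr; exact_mod_cast hk
    exact ⟨hf k, mem_Iic.2 (by linarith [(hf_branch k).2])⟩
  have hinj : InjOn f (Iic n) := fun i _ j _ hij => by
    rw [← floor_div_pi_eq_of_mem_Ioo (hf_branch i), hij, floor_div_pi_eq_of_mem_Ioo (hf_branch j)]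
  have hle :=
    ncard_le_ncard_of_injOn f hmaps hinj (finite_tanRoots_inter_Iic (one_pos.trans hm) t)
  rw [ncard_Iic_nat] at hle
  have : (n : ℝ) + 1 ≤ (tanRoots m ∩ Iic t).ncard := by exact_mod_cast hle
  linarith [Nat.lt_floor_add_one (t / π - 1 / 2)]

theorem ncard_setOf_tan_sqrt_mul_eq {κ : ℝ} (hκ : 0 < κ) (c L : ℝ) :
    {α : ℝ | 0 < α ∧ tan (√α * κ) = c * √α ∧ α ≤ L}.ncard =
      (tanRoots (c / κ) ∩ Iic (κ * √L)).ncard := by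
  refine ncard_congr (fun α _ => √α * κ) ?maps ?inj ?surj
  case maps =>
    rintro α ⟨hα, htan, hαL⟩
    refine ⟨⟨by positivity, ?_⟩, ?_⟩
    · rw [htan]; field_simp
    · rw [mem_Iic, mul_comm]; gcongr
  case inj =>
    intro α β hα hβ h
    rwa [mul_left_inj' hκ.ne', sqrt_inj hα.1.le hβ.1.le] at h
  case surj =>
    rintro y ⟨⟨hy, htan⟩, hyL⟩
    have hsqrt : √((y / κ) ^ 2) * κ = y := by
      rw [sqrt_sq (by positivity), div_mul_cancel₀ _ hκ.ne']
    refine ⟨(y / κ) ^ 2, ⟨by positivity, ?_, ?_⟩, hsqrt⟩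
    · rw [hsqrt, htan, sqrt_sq (by positivity)]; field_simp
    · exact (le_sqrt' (by positivity)).1 ((div_le_iff₀' hκ).2 hyL)

theorem stmt_7 (rb R δ L : ℝ) (hrb : 0 < rb) (hR : rb < R) (hδ : 0 < δ) (hL : δ ≤ L) :
    ((R - rb) / Real.pi - 1 / Real.sqrt δ) * Real.sqrt L ≤
      ({α : ℝ | 0 < α ∧ Real.tan (Real.sqrt α * (R - rb)) = R * Real.sqrt α ∧
        α ≤ L}.ncard : ℝ) ∧
    ({α : ℝ | 0 < α ∧ Real.tan (Real.sqrt α * (R - rb)) = R * Real.sqrt α ∧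
        α ≤ L}.ncard : ℝ) ≤ ((R - rb) / Real.pi + 1 / Real.sqrt δ) * Real.sqrt L := by
  have hκ : 0 < R - rb := sub_pos.2 hR
  have hm : 1 < R / (R - rb) := (one_lt_div hκ).2 (by linarith)
  have hδL : 1 ≤ √L / √δ := (one_le_div (sqrt_pos.2 hδ)).2 (sqrt_le_sqrt hL)
  have hupper := ncard_tanRoots_inter_Iic_le (one_pos.trans hm)
    (by positivity : 0 ≤ (R - rb) * √L)
  have hlower := sub_half_le_ncard_tanRoots_inter_Iic hm ((R - rb) * √L)
  rw [ncard_setOf_tan_sqrt_mul_eq hκ]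
  constructor
  · calc ((R - rb) / π - 1 / √δ) * √L = (R - rb) * √L / π - √L / √δ := by ring
      _ ≤ _ := by linarith
  · calc _ ≤ (R - rb) * √L / π + 1 := hupper
      _ ≤ (R - rb) * √L / π + √L / √δ := by linarith
      _ = ((R - rb) / π + 1 / √δ) * √L := by ring
end

section
/- For 0 < r_b < R, the function h(z) = ∫_{r_b}^{R} H(z,r)² r² dr, where H(z,r) = (1/r)[sin(√z(R−r))/(R√z) − cos(√z(R−r))], satisfies h(z) → (R−r_b)/2 as z → ∞ and h(z) → (R³ − r_b³)/(3R²) as z → 0⁺; in particular, since h is continuous and positive on (0,∞), inf_{z>0} h(z) > 0. -/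
/-!
With `s = √z`, the integrand `H² r²` is the square of
`K(s, r) = ((R - r) / R) sinc (s (R - r)) - cos (s (R - r))`,
which is jointly continuous on `ℝ²`. Hence `g(s) = ∫ K(s, r)² dr` is continuous, and
`g 0 = ∫ r² / R² dr` gives the limit at `0⁺`. For large `s`, `K² = cos² (s (R - r)) + O(1/s)`
uniformly in `r`, and `cos²` averages to `1/2`. Finally `K(s, R)² = 1`, so `g > 0`; being
continuous on `[0, ∞)` with a positive limit at `∞`, `g` is bounded below there by a positive
constant.
-/

open Real Set Filter

/-- `H(z,r)` from the Smoluchowski/Doi eigenfunction analysis. -/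
noncomputable def Hfun (R z r : ℝ) : ℝ :=
  (1 / r) * (Real.sin (Real.sqrt z * (R - r)) / (R * Real.sqrt z) -
    Real.cos (Real.sqrt z * (R - r)))

/-- `h(z) = ∫_{r_b}^R H(z,r)^2 r^2 dr`. -/
noncomputable def hfun (rb R z : ℝ) : ℝ := ∫ r in rb..R, (Hfun R z r) ^ 2 * r ^ 2

open Topology MeasureTheory intervalIntegral

lemma mul_sinc_mul {s : ℝ} (hs : s ≠ 0) (u : ℝ) : u * sinc (s * u) = sin (s * u) / s := by
  rcases eq_or_ne u 0 with rfl | hu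
  · simp
  · rw [sinc_of_ne_zero (mul_ne_zero hs hu)]
    field_simp

lemma integral_pos_of_continuous_of_nonneg_of_ne_zero {f : ℝ → ℝ} {a b : ℝ}
    (hf : Continuous f) (hnn : ∀ x, 0 ≤ f x) (hab : a < b) (hb : f b ≠ 0) :
    0 < ∫ x in a..b, f x := by
  obtain ⟨l, hlb, hl⟩ := mem_nhdsLT_iff_exists_Ioo_subset.mp <|
    nhdsWithin_le_nhds (hf.continuousAt.eventually (lt_mem_nhds ((hnn b).lt_of_ne' hb)))
  rw [← integral_add_adjacent_intervals (hf.intervalIntegrable a (max a l))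
    (hf.intervalIntegrable _ b)]
  refine add_pos_of_nonneg_of_pos (integral_nonneg (le_max_left a l) fun x _ => hnn x) ?_
  exact intervalIntegral_pos_of_pos_on (hf.intervalIntegrable _ _)
    (fun x hx => hl ⟨(le_max_right a l).trans_lt hx.1, hx.2⟩) (max_lt hab hlb)

lemma integral_cos_sq_mul_sub {s : ℝ} (hs : s ≠ 0) (a b : ℝ) :
    ∫ r in a..b, cos (s * (b - r)) ^ 2 = (b - a) / 2 + sin (2 * s * (b - a)) / (4 * s) := by
  rw [mul_assoc, sin_two_mul]
  simp only [mul_sub]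
  rw [integral_comp_sub_mul (fun x => cos x ^ 2) hs, integral_cos_sq, sub_self]
  simp only [cos_zero, sin_zero, smul_eq_mul]
  field_simp
  ring

lemma ContinuousOn.exists_pos_le_of_tendsto_atTop {f : ℝ → ℝ} {a L : ℝ}
    (hf : ContinuousOn f (Ici a)) (hpos : ∀ x ≥ a, 0 < f x) (hL : 0 < L)
    (hlim : Tendsto f atTop (𝓝 L)) : ∃ A > 0, ∀ x ≥ a, A ≤ f x := by
  obtain ⟨b, hb⟩ := eventually_atTop.mp (hlim.eventually (lt_mem_nhds (half_lt_self hL)))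
  obtain ⟨m, hm, hmin⟩ := isCompact_Icc.exists_isMinOn
    ⟨a, left_mem_Icc.mpr (le_max_left a b)⟩ (hf.mono Icc_subset_Ici_self)
  refine ⟨min (L / 2) (f m), lt_min (half_pos hL) (hpos m hm.1), fun x hx => ?_⟩
  rcases le_or_gt x (max a b) with hxb | hxb
  · exact (min_le_right _ _).trans (hmin ⟨hx, hxb⟩)
  · exact (min_le_left _ _).trans (hb x ((le_max_right a b).trans hxb.le)).le

-- `kernel R s r = r * Hfun R (s ^ 2) r` for `s > 0`.
noncomputable def kernel (R s r : ℝ) : ℝ := (R - r) / R * sinc (s * (R - r)) - cos (s * (R - r))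

noncomputable def kernelSqIntegral (rb R s : ℝ) : ℝ := ∫ r in rb..R, kernel R s r ^ 2

lemma continuous_uncurry_kernel (R : ℝ) : Continuous (Function.uncurry (kernel R)) := by
  unfold kernel Function.uncurry
  have := continuous_sinc
  fun_prop

lemma continuous_kernel_sq (R s : ℝ) : Continuous fun r => kernel R s r ^ 2 :=
  ((continuous_uncurry_kernel R).comp (Continuous.prodMk_right s)).pow 2

lemma kernel_of_ne_zero {R s : ℝ} (hs : s ≠ 0) (r : ℝ) :
    kernel R s r = sin (s * (R - r)) / (R * s) - cos (s * (R - r)) := by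
  rw [kernel, div_mul_eq_mul_div, mul_sinc_mul hs, div_div, mul_comm s R]

lemma Hfun_mul_eq_kernel {R z r : ℝ} (hz : 0 < z) (hr : r ≠ 0) :
    Hfun R z r * r = kernel R (√z) r := by
  rw [kernel_of_ne_zero (sqrt_pos.mpr hz).ne', Hfun]
  field_simp

lemma hfun_eq_kernelSqIntegral {rb R z : ℝ} (hrb : 0 < rb) (hR : 0 < R) (hz : 0 < z) :
    hfun rb R z = kernelSqIntegral rb R (√z) := by
  refine integral_congr fun r hr => ?_
  have hr0 : r ≠ 0 := (lt_of_lt_of_le (lt_min hrb hR) hr.1).ne'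
  simp only [← mul_pow, Hfun_mul_eq_kernel hz hr0]

lemma continuous_kernelSqIntegral (rb R : ℝ) : Continuous (kernelSqIntegral rb R) :=
  continuous_parametric_intervalIntegral_of_continuous'
    ((continuous_uncurry_kernel R).pow 2) rb R

lemma kernelSqIntegral_zero {R : ℝ} (hR : R ≠ 0) (rb : ℝ) :
    kernelSqIntegral rb R 0 = (R ^ 3 - rb ^ 3) / (3 * R ^ 2) := by
  have hker : ∀ r, kernel R 0 r ^ 2 = r ^ 2 / R ^ 2 := fun r => by
    simp only [kernel, zero_mul, sinc_zero, cos_zero]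
    field_simp
    ring
  simp only [kernelSqIntegral, hker, intervalIntegral.integral_div, integral_pow]
  field_simp
  ring

lemma kernelSqIntegral_pos {rb R : ℝ} (hR : rb < R) (s : ℝ) : 0 < kernelSqIntegral rb R s :=
  integral_pos_of_continuous_of_nonneg_of_ne_zero (continuous_kernel_sq R s)
    (fun r => sq_nonneg _) hR (by simp [kernel])

lemma abs_kernel_sq_sub_cos_sq_le {R s : ℝ} (hR : 0 < R) (hs : 0 < s) (r : ℝ) :
    |kernel R s r ^ 2 - cos (s * (R - r)) ^ 2| ≤ (R * s)⁻¹ ^ 2 + 2 * (R * s)⁻¹ := by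
  rw [kernel_of_ne_zero hs.ne']
  set x := s * (R - r)
  have hsin : |sin x / (R * s)| ≤ (R * s)⁻¹ := by
    rw [abs_div, abs_of_pos (mul_pos hR hs), div_eq_mul_inv]
    exact mul_le_of_le_one_left (by positivity) (abs_sin_le_one x)
  calc |(sin x / (R * s) - cos x) ^ 2 - cos x ^ 2|
      = |sin x / (R * s)| * |sin x / (R * s) - 2 * cos x| := by rw [← abs_mul]; ring_nf
    _ ≤ (R * s)⁻¹ * ((R * s)⁻¹ + 2 * 1) := by
      gcongr
      refine (abs_sub _ _).trans (add_le_add hsin ?_)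
      rw [abs_mul, abs_two]
      gcongr
      exact abs_cos_le_one x
    _ = (R * s)⁻¹ ^ 2 + 2 * (R * s)⁻¹ := by ring

lemma tendsto_kernelSqIntegral_atTop {R : ℝ} (hR : 0 < R) (rb : ℝ) :
    Tendsto (kernelSqIntegral rb R) atTop (𝓝 ((R - rb) / 2)) := by
  have hcos : Tendsto (fun s => ∫ r in rb..R, cos (s * (R - r)) ^ 2) atTop
      (𝓝 ((R - rb) / 2)) := by
    have hosc := tendsto_bdd_div_atTop_nhds_zero (f := fun s => sin (2 * s * (R - rb)))
      (.of_forall fun s => neg_one_le_sin _) (.of_forall fun s => sin_le_one _)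
      (tendsto_id.const_mul_atTop four_pos)
    rw [← add_zero ((R - rb) / 2)]
    refine (tendsto_const_nhds.add hosc).congr' ?_
    filter_upwards [eventually_gt_atTop 0] with s hs
    exact (integral_cos_sq_mul_sub hs.ne' rb R).symm
  have hinv : Tendsto (fun s => (R * s)⁻¹) atTop (𝓝 0) :=
    tendsto_inv_atTop_zero.comp (tendsto_id.const_mul_atTop hR)
  have herr : Tendsto (fun s => ∫ r in rb..R, (kernel R s r ^ 2 - cos (s * (R - r)) ^ 2))
      atTop (𝓝 0) := by
    have hbound := ((hinv.pow 2).add (hinv.const_mul 2)).mul_const |R - rb|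
    rw [zero_pow two_ne_zero, mul_zero, add_zero, zero_mul] at hbound
    refine squeeze_zero_norm' ?_ hbound
    filter_upwards [eventually_gt_atTop 0] with s hs
    exact norm_integral_le_of_norm_le_const fun r _ => abs_kernel_sq_sub_cos_sq_le hR hs r
  rw [← add_zero ((R - rb) / 2)]
  refine (hcos.add herr).congr fun s => ?_
  have hcos_int : IntervalIntegrable (fun r => cos (s * (R - r)) ^ 2) volume rb R :=
    (by fun_prop : Continuous fun r => cos (s * (R - r)) ^ 2).intervalIntegrable rb R
  rw [integral_sub ((continuous_kernel_sq R s).intervalIntegrable rb R) hcos_int,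
    add_sub_cancel, kernelSqIntegral]

theorem stmt_9 (rb R : ℝ) (hrb : 0 < rb) (hR : rb < R) :
    Tendsto (hfun rb R) atTop (nhds ((R - rb) / 2)) ∧
    Tendsto (hfun rb R) (nhdsWithin 0 (Ioi 0)) (nhds ((R ^ 3 - rb ^ 3) / (3 * R ^ 2))) ∧
    ∃ A > 0, ∀ z > 0, A ≤ hfun rb R z := by
  have hR0 : 0 < R := hrb.trans hR
  have hsqrt : ∀ z > 0, kernelSqIntegral rb R (√z) = hfun rb R z := fun z hz =>
    (hfun_eq_kernelSqIntegral hrb hR0 hz).symm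
  have hcont := continuous_kernelSqIntegral rb R
  have hlim := tendsto_kernelSqIntegral_atTop hR0 rb
  refine ⟨?_, ?_, ?_⟩
  · exact (hlim.comp tendsto_sqrt_atTop).congr' (eventually_gt_atTop 0 |>.mono hsqrt)
  · have h0 := ((hcont.comp continuous_sqrt).tendsto 0).mono_left
      (nhdsWithin_le_nhds (s := Ioi 0))
    rw [Function.comp_apply, sqrt_zero, kernelSqIntegral_zero hR0.ne'] at h0
    exact h0.congr' (eventually_mem_nhdsWithin.mono hsqrt)
  · obtain ⟨A, hA, hle⟩ := hcont.continuousOn.exists_pos_le_of_tendsto_atTop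
      (fun s _ => kernelSqIntegral_pos hR s) (half_pos (sub_pos.mpr hR)) hlim
    exact ⟨A, hA, fun z hz => hsqrt z hz ▸ hle _ (sqrt_nonneg z)⟩
end

section
/- Let r_b > 0, R > r_b, D > 0, λ > 0, and λ̂ = λ/D. The function T_Doi given piecewise by u⁻(r₀) = 1/(Dλ̂) + (sinh(√λ̂ r₀)/r₀)·(R³−r_b³)/(3D(r_b√λ̂ cosh(√λ̂ r_b) − sinh(√λ̂ r_b))) for 0 < r₀ < r_b, and u⁺(r₀) = (r_b²−r₀²)/(6D) + (R³/(3D))(1/r_b − 1/r₀) + 1/(Dλ̂) + (sinh(√λ̂ r_b)/r_b)·(R³−r_b³)/(3D(r_b√λ̂ cosh(√λ̂ r_b) − sinh(√λ̂ r_b))) for r_b < r₀ < R, satisfies the ODE Δ_{r₀}T − λ̂·1_{[0,r_b]}(r₀)·T = −1/D on (0,R)∖{r_b} with T'(R) = 0, where Δ_r T = T'' + (2/r)T'. -/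
open Real Set

/-- The Doi mean binding time, inner branch (`r₀ < r_b`). -/
noncomputable def uMinus (rb R D lamHat r₀ : ℝ) : ℝ :=
  1 / (D * lamHat) +
    (Real.sinh (Real.sqrt lamHat * r₀) / r₀) *
      ((R ^ 3 - rb ^ 3) /
        (3 * D * (rb * Real.sqrt lamHat * Real.cosh (Real.sqrt lamHat * rb) -
          Real.sinh (Real.sqrt lamHat * rb))))

/-- The Doi mean binding time, outer branch (`r_b < r₀ < R`). -/
noncomputable def uPlus (rb R D lamHat r₀ : ℝ) : ℝ :=
  (rb ^ 2 - r₀ ^ 2) / (6 * D) + R ^ 3 / (3 * D) * (1 / rb - 1 / r₀) + 1 / (D * lamHat) +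
    (Real.sinh (Real.sqrt lamHat * rb) / rb) *
      ((R ^ 3 - rb ^ 3) /
        (3 * D * (rb * Real.sqrt lamHat * Real.cosh (Real.sqrt lamHat * rb) -
          Real.sinh (Real.sqrt lamHat * rb))))

/-!
Both branches are handled through the flux form of the radial Laplacian, `Δ_r f = (r² f')' / r²`.
Inside, with `a = √λ̂`, the flux of `sinh (a r) / r` is `a r cosh (a r) - sinh (a r)`, whose derivative
is `a² r sinh (a r)`; so `sinh (a r) / r` is an eigenfunction with eigenvalue `λ̂`, and the constant
`1 / (D λ̂)` produces the source term. Outside, the flux of `u⁺` is `(R³ - r³) / (3 D)`, whose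
derivative is `-r² / D`, and it vanishes at `r = R`, which is the Neumann condition.
-/

open Filter Topology

noncomputable def radialLaplacian (f : ℝ → ℝ) (r : ℝ) : ℝ :=
  deriv (deriv f) r + (2 / r) * deriv f r

theorem radialLaplacian_congr {f g : ℝ → ℝ} {r : ℝ} (h : f =ᶠ[𝓝 r] g) :
    radialLaplacian f r = radialLaplacian g r := by
  rw [radialLaplacian, radialLaplacian, h.deriv.deriv_eq, h.deriv_eq]

theorem radialLaplacian_const_add_mul_const (c K : ℝ) (g : ℝ → ℝ) (r : ℝ) :
    radialLaplacian (fun x => c + g x * K) r = radialLaplacian g r * K := by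
  simp only [radialLaplacian, deriv_const_add', deriv_mul_const_field']
  ring

theorem radialLaplacian_eq_of_hasDerivAt_flux {f φ : ℝ → ℝ} {q r : ℝ} (hr : r ≠ 0)
    (hf : ∀ᶠ x in 𝓝 r, HasDerivAt f (φ x / x ^ 2) x) (hφ : HasDerivAt φ q r) :
    radialLaplacian f r = q / r ^ 2 := by
  have hderiv : deriv f =ᶠ[𝓝 r] fun x => φ x / x ^ 2 := hf.mono fun x hx => hx.deriv
  have hderiv2 : HasDerivAt (fun x => φ x / x ^ 2) _ r :=
    hφ.div (hasDerivAt_pow 2 r) (pow_ne_zero 2 hr)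
  rw [radialLaplacian, hderiv.deriv_eq, hderiv2.deriv, hderiv.eq_of_nhds]
  field_simp
  ring

theorem hasDerivAt_sinh_mul_div (a : ℝ) {x : ℝ} (hx : x ≠ 0) :
    HasDerivAt (fun y => sinh (a * y) / y) ((a * x * cosh (a * x) - sinh (a * x)) / x ^ 2) x := by
  refine (((hasDerivAt_id' x).const_mul a).sinh.div (hasDerivAt_id' x) hx).congr_deriv ?_
  ring

theorem radialLaplacian_sinh_mul_div (a : ℝ) {r : ℝ} (hr : r ≠ 0) :
    radialLaplacian (fun x => sinh (a * x) / x) r = a ^ 2 * (sinh (a * r) / r) := by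
  have hflux : HasDerivAt (fun x => a * x * cosh (a * x) - sinh (a * x))
      (a ^ 2 * r * sinh (a * r)) r := by
    have hax := (hasDerivAt_id' r).const_mul a
    refine ((hax.mul hax.cosh).sub hax.sinh).congr_deriv ?_
    ring
  have hf : ∀ᶠ x in 𝓝 r, HasDerivAt (fun y => sinh (a * y) / y)
      ((a * x * cosh (a * x) - sinh (a * x)) / x ^ 2) x :=
    (eventually_ne_nhds hr).mono fun x hx => hasDerivAt_sinh_mul_div a hx
  rw [radialLaplacian_eq_of_hasDerivAt_flux hr hf hflux]
  field_simp

theorem radialLaplacian_uMinus_sub (rb R D : ℝ) {lamHat r : ℝ} (hD : D ≠ 0) (hlamHat : 0 < lamHat)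
    (hr : r ≠ 0) :
    radialLaplacian (uMinus rb R D lamHat) r - lamHat * uMinus rb R D lamHat r = -(1 / D) := by
  unfold uMinus
  rw [radialLaplacian_const_add_mul_const, radialLaplacian_sinh_mul_div _ hr,
    sq_sqrt hlamHat.le]
  field_simp
  ring

theorem hasDerivAt_uPlus (rb R D lamHat : ℝ) {x : ℝ} (hx : x ≠ 0) :
    HasDerivAt (uPlus rb R D lamHat) ((R ^ 3 - x ^ 3) / (3 * D) / x ^ 2) x := by
  have hsq := ((hasDerivAt_pow 2 x).const_sub (rb ^ 2)).div_const (6 * D)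
  have hinv := (((hasDerivAt_const x 1).div (hasDerivAt_id' x) hx).const_sub (1 / rb)).const_mul
    (R ^ 3 / (3 * D))
  refine (((hsq.add hinv).add_const _).add_const _).congr_deriv ?_
  field_simp
  ring

theorem radialLaplacian_uPlus (rb R D lamHat : ℝ) {r : ℝ} (hr : r ≠ 0) :
    radialLaplacian (uPlus rb R D lamHat) r = -(1 / D) := by
  have hflux : HasDerivAt (fun x => (R ^ 3 - x ^ 3) / (3 * D)) (-(3 * r ^ 2) / (3 * D)) r := by
    refine (((hasDerivAt_pow 3 r).const_sub (R ^ 3)).div_const (3 * D)).congr_deriv ?_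
    norm_num
  have hf : ∀ᶠ x in 𝓝 r, HasDerivAt (uPlus rb R D lamHat) ((R ^ 3 - x ^ 3) / (3 * D) / x ^ 2) x :=
    (eventually_ne_nhds hr).mono fun x hx => hasDerivAt_uPlus rb R D lamHat hx
  rw [radialLaplacian_eq_of_hasDerivAt_flux hr hf hflux]
  field_simp

theorem stmt_13 (rb R D lam : ℝ) (hrb : 0 < rb) (hR : rb < R) (hD : 0 < D) (hlam : 0 < lam) :
    let lamHat := lam / D
    let T : ℝ → ℝ := fun r₀ =>
      if r₀ < rb then uMinus rb R D lamHat r₀ else uPlus rb R D lamHat r₀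
    (∀ r₀ ∈ Ioo (0 : ℝ) R, r₀ ≠ rb →
        deriv (deriv T) r₀ + (2 / r₀) * deriv T r₀ -
            lamHat * (Set.indicator (Set.Icc 0 rb) (fun _ => (1 : ℝ)) r₀) * T r₀ =
          -(1 / D)) ∧
    deriv T R = 0 := by
  intro lamHat T
  have hT_outer : ∀ r, rb < r → T =ᶠ[𝓝 r] uPlus rb R D lamHat := fun r hr =>
    eventuallyEq_of_mem (Ioi_mem_nhds hr) fun x hx => if_neg hx.not_gt
  refine ⟨?_, ?_⟩
  · rintro r₀ ⟨hr₀, -⟩ hne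
    change radialLaplacian T r₀ - _ = _
    rcases hne.lt_or_gt with hlt | hgt
    · have hT : T =ᶠ[𝓝 r₀] uMinus rb R D lamHat :=
        eventuallyEq_of_mem (Iio_mem_nhds hlt) fun x hx => if_pos hx
      have hmem : r₀ ∈ Icc 0 rb := ⟨hr₀.le, hlt.le⟩
      rw [radialLaplacian_congr hT, indicator_of_mem hmem, mul_one, hT.eq_of_nhds]
      exact radialLaplacian_uMinus_sub rb R D hD.ne' (div_pos hlam hD) hr₀.ne'
    · rw [radialLaplacian_congr (hT_outer r₀ hgt), indicator_of_notMem fun h => hgt.not_ge h.2,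
        radialLaplacian_uPlus rb R D lamHat hr₀.ne']
      ring
  · rw [(hT_outer R hR).deriv_eq, (hasDerivAt_uPlus rb R D lamHat (hrb.trans hR).ne').deriv]
    simp
end

section
/- Let r_b, R, D, λ > 0 with r_b < R and λ̂ = λ/D. The difference of mean binding times |⟨T_Doi⟩(r₀) − ⟨T_Smol⟩(r₀)| = |1/(Dλ̂) + (sinh(√λ̂ r_b)/r_b)·(R³ − r_b³)/(3D(r_b√λ̂ cosh(√λ̂ r_b) − sinh(√λ̂ r_b)))| is O(λ^{−1/2}) as λ → ∞; i.e., there exist constants C, λ₀ (depending on r_b, R, D) such that for λ ≥ λ₀ this quantity is at most C/√λ. -/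
/-!
Writing `x = √(λ/D) r_b`, the Doi correction is
`1/λ + (R³ - r_b³)/(3 D r_b) · sinh x / (x cosh x - sinh x)`. Since `sinh x ≤ cosh x`, the denominator `x cosh x - sinh x` is at least `(x - 1) sinh x`, so the
ratio is at most `1/(x - 1) ≤ 2/x` once `x ≥ 2`; and `x` grows like `√λ`, while `1/λ ≤ 1/√λ` for `λ ≥ 1`.
-/

open Real

lemma sub_one_mul_sinh_le_mul_cosh_sub_sinh {x : ℝ} (hx : 0 ≤ x) :
    (x - 1) * sinh x ≤ x * cosh x - sinh x := by
  nlinarith [mul_le_mul_of_nonneg_left (sinh_lt_cosh x).le hx]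

lemma mul_cosh_sub_sinh_pos {x : ℝ} (hx : 1 < x) : 0 < x * cosh x - sinh x :=
  (mul_pos (sub_pos.mpr hx) (sinh_pos_iff.mpr (by linarith))).trans_le
    (sub_one_mul_sinh_le_mul_cosh_sub_sinh (by linarith))

lemma sinh_div_mul_cosh_sub_sinh_le {x : ℝ} (hx : 2 ≤ x) :
    sinh x / (x * cosh x - sinh x) ≤ 2 / x := by
  have hsinh : 0 < sinh x := sinh_pos_iff.mpr (by linarith)
  have hden := sub_one_mul_sinh_le_mul_cosh_sub_sinh (by linarith : 0 ≤ x)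
  rw [div_le_div_iff₀ (mul_cosh_sub_sinh_pos (by linarith)) (by linarith)]
  nlinarith

lemma two_le_sqrt_div_mul {r D lam : ℝ} (hr : 0 < r) (hD : 0 < D) (hlam : 4 * D / r ^ 2 ≤ lam) :
    2 ≤ √(lam / D) * r := by
  have h : (2 / r) ^ 2 ≤ lam / D := by
    rw [le_div_iff₀ hD]
    calc (2 / r) ^ 2 * D = 4 * D / r ^ 2 := by ring
      _ ≤ lam := hlam
  calc (2 : ℝ) = 2 / r * r := (div_mul_cancel₀ 2 hr.ne').symm
    _ ≤ √(lam / D) * r := by gcongr; exact le_sqrt_of_sq_le h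

lemma one_div_le_one_div_sqrt {lam : ℝ} (hlam : 1 ≤ lam) : 1 / lam ≤ 1 / √lam :=
  one_div_le_one_div_of_le (by positivity) (sqrt_le_self_iff.mpr (Or.inr hlam))

theorem stmt_15 (rb R D : ℝ) (hrb : 0 < rb) (hR : rb < R) (hD : 0 < D) :
    ∃ C > 0, ∃ lam₀ > 0, ∀ lam ≥ lam₀,
      |1 / (D * (lam / D)) +
          (Real.sinh (Real.sqrt (lam / D) * rb) / rb) *
            ((R ^ 3 - rb ^ 3) /
              (3 * D * (rb * Real.sqrt (lam / D) * Real.cosh (Real.sqrt (lam / D) * rb) -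
                Real.sinh (Real.sqrt (lam / D) * rb))))| ≤ C / Real.sqrt lam := by
  have hA : 0 < R ^ 3 - rb ^ 3 := sub_pos.mpr (pow_lt_pow_left₀ hR hrb.le three_ne_zero)
  set K := (R ^ 3 - rb ^ 3) / (3 * D * rb)
  refine ⟨1 + 2 * K * √D / rb, by positivity, max 1 (4 * D / rb ^ 2), by positivity,
    fun lam hlam => ?_⟩
  have hlam1 : 1 ≤ lam := le_of_max_le_left hlam
  have hx := two_le_sqrt_div_mul hrb hD (le_of_max_le_right hlam)
  set x := √(lam / D) * rb
  have hratio := sinh_div_mul_cosh_sub_sinh_le hx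
  have hratio_nonneg : 0 ≤ sinh x / (x * cosh x - sinh x) :=
    div_nonneg (sinh_pos_iff.mpr (by linarith)).le (mul_cosh_sub_sinh_pos (by linarith)).le
  have hx_eq : 2 / x = 2 * √D / rb / √lam := by
    have hsqrt : √lam ≠ 0 := by positivity
    simp only [x, sqrt_div (by linarith : (0 : ℝ) ≤ lam)]
    field_simp
  have hfactor : ∀ d : ℝ, sinh x / rb * ((R ^ 3 - rb ^ 3) / (3 * D * d)) = K * (sinh x / d) :=
    fun d => by ring
  rw [mul_div_cancel₀ lam hD.ne', mul_comm rb, hfactor, abs_of_nonneg (by positivity)]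
  calc 1 / lam + K * (sinh x / (x * cosh x - sinh x))
      ≤ 1 / √lam + K * (2 / x) :=
        add_le_add (one_div_le_one_div_sqrt hlam1) (by gcongr)
    _ = (1 + 2 * K * √D / rb) / √lam := by rw [hx_eq]; ring
end
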